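/- arXiv:1301.1940 — 4 statements merged into one kernel-verified Lean document; each statement's English description precedes it below -/
import Mathlib

section
/- For every x ∈ V, the Langlands retraction satisfies 𝔏(x) ≥ x, i.e., 𝔏(x) − x lies in the closed convex cone V^pos generated by the basis vectors α_i. -/
/-!
The nearest point `y` of the convex cone `V⁺` to `x` is characterised by the variational
inequality `⟪x - y, z - y⟫ ≤ 0` for `z ∈ V⁺`. Taking `z = y + ω i` gives `⟪y - x, ω i⟫ ≥ 0`
for every `i`, and since `(ω i)` is dual to the basis `(α i)`, these inner products are exactly
the coordinates of `y - x` in that basis.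
-/

open scoped InnerProductSpace
open Finset

/-- The closed convex cone generated by a finite family of vectors:
the set of non-negative linear combinations. -/
def coneGen {V : Type*} [AddCommGroup V] [Module ℝ V] {ι : Type*} [Fintype ι]
    (v : ι → V) : Set V :=
  {x | ∃ c : ι → ℝ, (∀ i, 0 ≤ c i) ∧ x = ∑ i, c i • v i}

/-- `y` is a point of `K` closest to `x`. -/
def IsClosestPoint {V : Type*} [NormedAddCommGroup V] (K : Set V) (x y : V) : Prop :=
  y ∈ K ∧ ∀ z ∈ K, dist x y ≤ dist x z

namespace IsClosestPoint

theorem norm_eq_iInf {V : Type*} [NormedAddCommGroup V] {K : Set V} {x y : V}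
    (h : IsClosestPoint K x y) : ‖x - y‖ = ⨅ w : K, ‖x - w‖ := by
  have : Nonempty K := ⟨⟨y, h.1⟩⟩
  have hbdd : BddBelow (Set.range fun w : K => ‖x - w‖) :=
    ⟨0, by rintro _ ⟨w, rfl⟩; exact norm_nonneg _⟩
  refine le_antisymm (le_ciInf fun w => ?_) (ciInf_le hbdd ⟨y, h.1⟩)
  simpa only [dist_eq_norm] using h.2 w w.2

theorem real_inner_sub_le_zero {V : Type*} [NormedAddCommGroup V] [InnerProductSpace ℝ V]
    {K : Set V} {x y z : V} (h : IsClosestPoint K x y) (hK : Convex ℝ K) (hz : z ∈ K) :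
    ⟪x - y, z - y⟫_ℝ ≤ 0 :=
  (norm_eq_iInf_iff_real_inner_le_zero hK h.1).1 h.norm_eq_iInf z hz

end IsClosestPoint

section coneGen

variable {V ι : Type*} [AddCommGroup V] [Module ℝ V] [Fintype ι] {v : ι → V}

theorem convex_coneGen (v : ι → V) : Convex ℝ (coneGen v) := by
  rintro _ ⟨c, hc, rfl⟩ _ ⟨d, hd, rfl⟩ s t hs ht -
  refine ⟨fun i => s * c i + t * d i, fun i => by have := hc i; have := hd i; positivity, ?_⟩
  simp only [smul_sum, smul_smul, add_smul, sum_add_distrib]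

theorem add_mem_coneGen {x y : V} (hx : x ∈ coneGen v) (hy : y ∈ coneGen v) :
    x + y ∈ coneGen v := by
  obtain ⟨c, hc, rfl⟩ := hx
  obtain ⟨d, hd, rfl⟩ := hy
  exact ⟨c + d, fun i => add_nonneg (hc i) (hd i),
    by simp only [Pi.add_apply, add_smul, sum_add_distrib]⟩

theorem mem_coneGen_self (i : ι) : v i ∈ coneGen v := by
  classical
  have hsingle : 0 ≤ (Pi.single i 1 : ι → ℝ) := Pi.single_nonneg.2 zero_le_one
  exact ⟨Pi.single i 1, hsingle, by simp [Pi.single_apply, ite_smul]⟩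

theorem mem_coneGen_of_repr_nonneg (b : Module.Basis ι ℝ V) {u : V}
    (hu : ∀ i, 0 ≤ b.repr u i) : u ∈ coneGen ⇑b :=
  ⟨_, hu, (b.sum_repr u).symm⟩

end coneGen

theorem Module.Basis.repr_apply_eq_real_inner_of_dual {V ι : Type*} [NormedAddCommGroup V]
    [InnerProductSpace ℝ V] [DecidableEq ι] (b : Module.Basis ι ℝ V) {ω : ι → V}
    (hω : ∀ i j, ⟪ω i, b j⟫_ℝ = if i = j then 1 else 0) (u : V) (i : ι) :
    b.repr u i = ⟪ω i, u⟫_ℝ := by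
  have hcoord : b.coord i = innerₛₗ ℝ (ω i) :=
    b.ext fun j => by simp [hω, Finsupp.single_apply, eq_comm]
  exact LinearMap.congr_fun hcoord u

theorem langlands_retraction_ge_general
    {V ι : Type*} [NormedAddCommGroup V] [InnerProductSpace ℝ V]
    [Fintype ι] [DecidableEq ι] (b : Module.Basis ι ℝ V) (ω : ι → V)
    (hω : ∀ i j, ⟪ω i, b j⟫_ℝ = if i = j then 1 else 0)
    (x y : V) (hy : IsClosestPoint (coneGen ω) x y) :
    y - x ∈ coneGen (⇑b) := by
  refine mem_coneGen_of_repr_nonneg b fun i => ?_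
  have hperp : ⟪x - y, ω i⟫_ℝ ≤ 0 := by
    simpa using hy.real_inner_sub_le_zero (convex_coneGen ω)
      (add_mem_coneGen hy.1 (mem_coneGen_self i))
  rw [b.repr_apply_eq_real_inner_of_dual hω, ← neg_sub, inner_neg_right, real_inner_comm]
  linarith

/-- For every `x`, the Langlands retraction satisfies `𝔏(x) ≥ x`, i.e.
`𝔏(x) - x` lies in the cone `V^pos` generated by the basis vectors `α i`. -/
theorem langlands_retraction_ge
    {V ι : Type*} [NormedAddCommGroup V] [InnerProductSpace ℝ V] [FiniteDimensional ℝ V]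
    [Fintype ι] [DecidableEq ι] (b : Module.Basis ι ℝ V) (ω : ι → V)
    (hω : ∀ i j, ⟪ω i, b j⟫_ℝ = if i = j then 1 else 0)
    (x y : V) (hy : IsClosestPoint (coneGen ω) x y) :
    y - x ∈ coneGen (⇑b) :=
  langlands_retraction_ge_general b ω hω x y hy
end

section
/- Assume ⟨α_i, α_j⟩ ≤ 0 for i ≠ j. For each subset J ⊆ Γ, the orthogonal projection pr_J onto V_J^⊥ (with kernel V_J) is order-preserving: if x ≤ y then pr_J(x) ≤ pr_J(y), where x ≤ y means y − x ∈ V^pos. -/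
open scoped InnerProductSpace
open Finset

/-! For `i ∉ J`, `pr_J (α i) = α i - q` with `q ∈ V_J` and `⟪q, α k⟫ = ⟪α i, α k⟫ ≤ 0` for
`k ∈ J`. For an obtuse linearly independent family, a vector of its span pairing non-negatively
with every member is a non-negative combination of them: writing its coefficients as `c⁺ - c⁻`,
the vector `u = ∑ c⁻ⱼ αⱼ` satisfies `⟪u, u⟫ ≤ 0`, so `c⁻ = 0`. Hence `-q ∈ V^pos`, so
`pr_J (α i) ∈ V^pos`, and the linear map `pr_J` preserves `V^pos`. -/

open Submodule

theorem coneGen_eq_hull {V ι : Type*} [AddCommGroup V] [Module ℝ V] [Fintype ι] (v : ι → V) :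
    coneGen v = PointedCone.hull ℝ (Set.range v) := by
  ext x
  rw [SetLike.mem_coe, mem_span_range_iff_exists_fun]
  constructor
  · rintro ⟨c, hc, rfl⟩
    exact ⟨fun i => ⟨c i, hc i⟩, rfl⟩
  · rintro ⟨c, rfl⟩
    exact ⟨fun i => c i, fun i => (c i).2, rfl⟩

section Obtuse

variable {V ι : Type*} [NormedAddCommGroup V] [InnerProductSpace ℝ V] {v : ι → V}

theorem inner_sum_smul_nonpos_of_mul_eq_zero [Fintype ι]
    (hobtuse : Pairwise fun j k => ⟪v j, v k⟫_ℝ ≤ 0)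
    {a b : ι → ℝ} (ha : 0 ≤ a) (hb : 0 ≤ b) (hab : ∀ j, a j * b j = 0) :
    ⟪∑ j, a j • v j, ∑ k, b k • v k⟫_ℝ ≤ 0 := by
  simp only [sum_inner, inner_sum, real_inner_smul_left, real_inner_smul_right]
  refine sum_nonpos fun k _ => sum_nonpos fun j _ => ?_
  rcases eq_or_ne j k with rfl | hjk
  · rw [← mul_assoc, mul_comm (b j), hab, zero_mul]
  · exact mul_nonpos_of_nonneg_of_nonpos (hb k)
      (mul_nonpos_of_nonneg_of_nonpos (ha j) (hobtuse hjk))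

theorem nonneg_of_inner_sum_smul_nonneg [Fintype ι] (hli : LinearIndependent ℝ v)
    (hobtuse : Pairwise fun j k => ⟪v j, v k⟫_ℝ ≤ 0) {c : ι → ℝ}
    (hc : ∀ k, 0 ≤ ⟪∑ j, c j • v j, v k⟫_ℝ) : 0 ≤ c := by
  set u := ∑ j, (c j)⁻ • v j
  have hu : u = ∑ j, (c j)⁺ • v j - ∑ j, c j • v j := by
    rw [← sum_sub_distrib]
    refine sum_congr rfl fun j _ => ?_
    rw [← sub_smul]
    congr 1
    linarith [posPart_sub_negPart (c j)]
  have hu_nonpos : ⟪u, u⟫_ℝ ≤ 0 := by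
    have hpos : ⟪∑ j, (c j)⁺ • v j, u⟫_ℝ ≤ 0 :=
      inner_sum_smul_nonpos_of_mul_eq_zero hobtuse (fun j => posPart_nonneg (c j))
        (fun j => negPart_nonneg (c j)) fun j => by
          rcases le_total (c j) 0 with h | h
          · simp [posPart_eq_zero.2 h]
          · simp [negPart_eq_zero.2 h]
    have hc_u : 0 ≤ ⟪∑ j, c j • v j, u⟫_ℝ := by
      simp only [u, inner_sum, real_inner_smul_right]
      exact sum_nonneg fun k _ => mul_nonneg (negPart_nonneg _) (hc k)
    nth_rewrite 1 [hu]
    rw [inner_sub_left]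
    linarith
  have hneg : ∀ j, (c j)⁻ = 0 :=
    Fintype.linearIndependent_iff.1 hli _ (real_inner_self_nonpos.1 hu_nonpos)
  exact fun j => negPart_eq_zero.1 (hneg j)

theorem mem_hull_of_inner_nonneg [Fintype ι] (hli : LinearIndependent ℝ v)
    (hobtuse : Pairwise fun j k => ⟪v j, v k⟫_ℝ ≤ 0) {w : V} (hw : w ∈ span ℝ (Set.range v))
    (h : ∀ k, 0 ≤ ⟪w, v k⟫_ℝ) : w ∈ PointedCone.hull ℝ (Set.range v) := by
  obtain ⟨c, rfl⟩ := (mem_span_range_iff_exists_fun ℝ).1 hw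
  rw [← SetLike.mem_coe, ← coneGen_eq_hull]
  exact ⟨c, nonneg_of_inner_sum_smul_nonneg hli hobtuse h, rfl⟩

theorem starProjection_orthogonal_span_image_mem_hull (hli : LinearIndependent ℝ v)
    (hobtuse : Pairwise fun j k => ⟪v j, v k⟫_ℝ ≤ 0) (J : Finset ι)
    [(span ℝ (v '' J)).HasOrthogonalProjection] (i : ι) :
    (span ℝ (v '' J))ᗮ.starProjection (v i) ∈ PointedCone.hull ℝ (Set.range v) := by
  set K := span ℝ (v '' J)
  by_cases hi : i ∈ J
  · rw [starProjection_orthogonal_apply_eq_zero (subset_span (Set.mem_image_of_mem v hi))]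
    exact zero_mem _
  rw [starProjection_orthogonal_val, sub_eq_add_neg]
  refine add_mem (PointedCone.subset_hull (Set.mem_range_self i)) ?_
  have hrange : v '' J = Set.range fun j : J => v j := Set.image_eq_range v J
  have hq : -K.starProjection (v i) ∈ PointedCone.hull ℝ (v '' J) := by
    rw [hrange]
    refine mem_hull_of_inner_nonneg (hli.comp _ Subtype.val_injective)
      (hobtuse.comp_of_injective Subtype.val_injective)
      (hrange ▸ neg_mem (K.starProjection_apply_mem _)) fun k => ?_
    have hperp : ⟪v i - K.starProjection (v i), v k⟫_ℝ = 0 :=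
      inner_left_of_mem_orthogonal (subset_span (Set.mem_image_of_mem v k.2))
        (K.sub_starProjection_mem_orthogonal _)
    have hik : ⟪v i, v k⟫_ℝ ≤ 0 := hobtuse fun h => hi (h ▸ k.2)
    rw [inner_sub_left] at hperp
    rw [Function.comp_apply, inner_neg_left]
    linarith
  exact span_mono (Set.image_subset_range v J) hq

end Obtuse

/-- For an obtuse basis, the orthogonal projection `pr_J` onto `V_J^⊥`
(with kernel `V_J = span{α j : j ∈ J}`) is order-preserving for the `V^pos` order. -/
theorem orthogonal_projection_order_preserving
    {V ι : Type*} [NormedAddCommGroup V] [InnerProductSpace ℝ V] [FiniteDimensional ℝ V]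
    [Fintype ι] (b : Module.Basis ι ℝ V)
    (hobtuse : ∀ i j, i ≠ j → ⟪(b i : V), b j⟫_ℝ ≤ 0)
    (J : Finset ι) (p : V → V)
    (hp : ∀ v : V, p v ∈ (Submodule.span ℝ (⇑b '' (J : Set ι)))ᗮ ∧
      v - p v ∈ Submodule.span ℝ (⇑b '' (J : Set ι)))
    (x y : V) (hxy : y - x ∈ coneGen (⇑b)) :
    p y - p x ∈ coneGen (⇑b) := by
  set K := span ℝ (⇑b '' (J : Set ι))
  have hp_eq : p = Kᗮ.starProjection := funext fun v =>
    (eq_starProjection_of_mem_orthogonal (hp v).1 (K.le_orthogonal_orthogonal (hp v).2)).symm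
  have hgen : Set.range b ⊆
      PointedCone.comap (Kᗮ.starProjection : V →ₗ[ℝ] V) (PointedCone.hull ℝ (Set.range b)) :=
    Set.range_subset_iff.2 fun i =>
      starProjection_orthogonal_span_image_mem_hull b.linearIndependent hobtuse J i
  rw [coneGen_eq_hull] at hxy ⊢
  rw [hp_eq, ← map_sub]
  exact span_le.2 hgen hxy
end

section
/- The cones K_J for J ⊆ Γ cover V, where K_J is the closed convex cone generated by {ω_j : j ∈ Γ ∖ J} and {−α_i : i ∈ J}. -/
/-!
Project `x` onto the closed cone `C = {y | ∀ i, 0 ≤ ⟪b i, y⟫}` spanned by the `ω i`. The Moreau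
decomposition `x = p + (x - p)` puts `p` in `C` and `x - p` in the polar cone of `C`, which is the
cone spanned by the `-b i`; moreover `p ⊥ x - p`. In the dual bases the coefficients
`c i = ⟪b i, p⟫` and `d i = -⟪ω i, x - p⟫` are therefore non-negative with `∑ c i d i = 0`, so
`c i d i = 0` for every `i`, and `x` lies in `K_J` for `J = {i | d i ≠ 0}`.
-/

open scoped InnerProductSpace
open Finset

theorem ProperCone.exists_moreau_decomposition {V : Type*} [NormedAddCommGroup V]
    [InnerProductSpace ℝ V] [CompleteSpace V] (C : ProperCone ℝ V) (x : V) :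
    ∃ p ∈ C, ⟪p, x - p⟫_ℝ = 0 ∧ ∀ w ∈ C, ⟪w, x - p⟫_ℝ ≤ 0 := by
  obtain ⟨p, hpC, hmin⟩ := exists_norm_eq_iInf_of_complete_convex C.nonempty
    C.isClosed.isComplete C.convex x
  have hproj : ∀ w ∈ C, ⟪x - p, w - p⟫_ℝ ≤ 0 :=
    (norm_eq_iInf_iff_real_inner_le_zero C.convex hpC).mp hmin
  have hpolar : ∀ w ∈ C, ⟪w, x - p⟫_ℝ ≤ 0 := fun w hw => by
    simpa [real_inner_comm] using hproj (p + w) (C.add_mem hpC hw)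
  refine ⟨p, hpC, le_antisymm (hpolar p hpC) ?_, hpolar⟩
  simpa [real_inner_comm] using hproj 0 C.zero_mem

theorem exists_mem_coneGen_ite {V ι : Type*} [AddCommGroup V] [Module ℝ V] [Fintype ι]
    [DecidableEq ι] {u v : ι → V} {c d : ι → ℝ} (hc : ∀ i, 0 ≤ c i) (hd : ∀ i, 0 ≤ d i)
    (hcd : ∀ i, c i * d i = 0) :
    ∃ J : Finset ι, ∑ i, (c i • u i + d i • v i) ∈ coneGen (fun i => if i ∈ J then v i else u i) := by
  refine ⟨univ.filter (d · ≠ 0), fun i => if d i ≠ 0 then d i else c i,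
    fun i => ite_nonneg (hd i) (hc i), sum_congr rfl fun i _ => ?_⟩
  by_cases hdi : d i = 0
  · simp [hdi]
  · simp [hdi, (mul_eq_zero.mp (hcd i)).resolve_right hdi]

section DualBases

variable {V ι : Type*} [NormedAddCommGroup V] [InnerProductSpace ℝ V] [Fintype ι] [DecidableEq ι]
  {b : Module.Basis ι ℝ V} {ω : ι → V}

theorem repr_apply_eq_inner_of_inner_eq_ite
    (hω : ∀ i j, ⟪ω i, b j⟫_ℝ = if i = j then 1 else 0) (y : V) (i : ι) :
    b.repr y i = ⟪ω i, y⟫_ℝ := by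
  conv_rhs => rw [← b.sum_repr y, inner_sum]
  simp only [real_inner_smul_right, hω, mul_ite, mul_one, mul_zero, sum_ite_eq, mem_univ, if_true]

theorem sum_inner_smul_basis_of_inner_eq_ite
    (hω : ∀ i j, ⟪ω i, b j⟫_ℝ = if i = j then 1 else 0) (y : V) :
    ∑ i, ⟪ω i, y⟫_ℝ • b i = y := by
  simp_rw [← repr_apply_eq_inner_of_inner_eq_ite hω]
  exact b.sum_repr y

theorem sum_inner_basis_smul_of_inner_eq_ite
    (hω : ∀ i j, ⟪ω i, b j⟫_ℝ = if i = j then 1 else 0) (y : V) :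
    ∑ i, ⟪b i, y⟫_ℝ • ω i = y := by
  refine InnerProductSpace.ext_inner_left_basis b fun j => ?_
  simp only [inner_sum, real_inner_smul_right, real_inner_comm (ω _) (b j), hω, mul_ite, mul_one,
    mul_zero, sum_ite_eq', mem_univ, if_true]

end DualBases

theorem cones_cover_general
    {V ι : Type*} [NormedAddCommGroup V] [InnerProductSpace ℝ V]
    [Fintype ι] [DecidableEq ι] (b : Module.Basis ι ℝ V) (ω : ι → V)
    (hω : ∀ i j, ⟪ω i, b j⟫_ℝ = if i = j then 1 else 0)
    (x : V) :
    ∃ J : Finset ι, x ∈ coneGen (fun i => if i ∈ J then -(b i : V) else ω i) := by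
  have : FiniteDimensional ℝ V := Module.Finite.of_basis b
  obtain ⟨p, hpC, hperp, hpolar⟩ :=
    (ProperCone.innerDual (Set.range b)).exists_moreau_decomposition x
  have hc : ∀ i, 0 ≤ ⟪b i, p⟫_ℝ := fun i => hpC (Set.mem_range_self i)
  have hω_mem : ∀ j, ω j ∈ ProperCone.innerDual (Set.range b) := by
    rintro j _ ⟨i, rfl⟩
    simp only [innerₗ_apply_apply, real_inner_comm, hω]
    split_ifs <;> norm_num
  have hd : ∀ i, 0 ≤ -⟪ω i, x - p⟫_ℝ := fun i => neg_nonneg.mpr (hpolar _ (hω_mem i))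
  have hcd : ∑ i, ⟪b i, p⟫_ℝ * -⟪ω i, x - p⟫_ℝ = 0 := by
    calc ∑ i, ⟪b i, p⟫_ℝ * -⟪ω i, x - p⟫_ℝ = -⟪∑ i, ⟪b i, p⟫_ℝ • ω i, x - p⟫_ℝ := by
          simp [sum_inner, real_inner_smul_left]
      _ = 0 := by rw [sum_inner_basis_smul_of_inner_eq_ite hω, hperp, neg_zero]
  have hcd_each : ∀ i, ⟪b i, p⟫_ℝ * -⟪ω i, x - p⟫_ℝ = 0 := fun i =>
    (sum_eq_zero_iff_of_nonneg fun i _ => mul_nonneg (hc i) (hd i)).mp hcd i (mem_univ i)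
  have hx : ∑ i, (⟪b i, p⟫_ℝ • ω i + -⟪ω i, x - p⟫_ℝ • -b i) = x := by
    simp only [neg_smul_neg, sum_add_distrib, sum_inner_basis_smul_of_inner_eq_ite hω,
      sum_inner_smul_basis_of_inner_eq_ite hω, add_sub_cancel]
  obtain ⟨J, hJ⟩ := exists_mem_coneGen_ite (u := ω) (v := fun i => -b i) hc hd hcd_each
  exact ⟨J, hx ▸ hJ⟩

/-- The cones `K_J` (generated by `{ω j : j ∉ J}` and `{-α i : i ∈ J}`)
for `J ⊆ Γ` cover `V`. -/
theorem cones_cover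
    {V ι : Type*} [NormedAddCommGroup V] [InnerProductSpace ℝ V] [FiniteDimensional ℝ V]
    [Fintype ι] [DecidableEq ι] (b : Module.Basis ι ℝ V) (ω : ι → V)
    (hω : ∀ i j, ⟪ω i, b j⟫_ℝ = if i = j then 1 else 0)
    (x : V) :
    ∃ J : Finset ι, x ∈ coneGen (fun i => if i ∈ J then -(b i : V) else ω i) :=
  cones_cover_general b ω hω x
end

section
/- Assume ⟨α_i, α_j⟩ ≤ 0 for i ≠ j. Then 𝔏(x) is the unique element y of { y ∈ V⁺ : y ≥ x } such that ⟨y, α_i⟩ = 0 for every index i for which the coefficient of α_i in y − x is nonzero. -/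
open scoped InnerProductSpace
open Finset

/-!
`V⁺ = coneGen ω` is the cone `{z | ∀ i, 0 ≤ ⟪z, b i⟫}`, and its dual cone is `coneGen b`.
By Moreau's characterization, `p` is the projection of `x` onto a convex cone `K` iff `p ∈ K`,
`p - x` lies in the dual cone of `K`, and `⟪p - x, p⟫ = 0`. Writing `p - x = ∑ cᵢ bᵢ` with
`cᵢ ≥ 0`, the last sum `∑ cᵢ ⟪p, bᵢ⟫` has non-negative terms, so it vanishes iff
`⟪p, bᵢ⟫ = 0` whenever `cᵢ ≠ 0`. Uniqueness is that of the projection onto a convex set.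
-/

section ClosestPoint

variable {V : Type*} [NormedAddCommGroup V] [InnerProductSpace ℝ V] {K : Set V} {x p q : V}

theorem isClosestPoint_iff_inner_sub_nonpos (hK : Convex ℝ K) :
    IsClosestPoint K x p ↔ p ∈ K ∧ ∀ w ∈ K, ⟪x - p, w - p⟫_ℝ ≤ 0 := by
  refine ⟨fun ⟨hp, hmin⟩ => ⟨hp, ?_⟩, fun ⟨hp, hvar⟩ => ⟨hp, ?_⟩⟩
  · have : Nonempty K := ⟨⟨p, hp⟩⟩
    refine (norm_eq_iInf_iff_real_inner_le_zero hK hp).mp (le_antisymm ?_ ?_)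
    · exact le_ciInf fun w => by simpa only [dist_eq_norm] using hmin w w.2
    · exact ciInf_le ⟨0, by rintro r ⟨w, rfl⟩; positivity⟩ (⟨p, hp⟩ : K)
  · intro z hz
    rw [dist_eq_norm, dist_eq_norm, (norm_eq_iInf_iff_real_inner_le_zero hK hp).mpr hvar]
    exact ciInf_le ⟨0, by rintro r ⟨w, rfl⟩; positivity⟩ (⟨z, hz⟩ : K)

theorem IsClosestPoint.unique (hK : Convex ℝ K) (hp : IsClosestPoint K x p)
    (hq : IsClosestPoint K x q) : p = q := by
  obtain ⟨hpK, hp⟩ := (isClosestPoint_iff_inner_sub_nonpos hK).mp hp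
  obtain ⟨hqK, hq⟩ := (isClosestPoint_iff_inner_sub_nonpos hK).mp hq
  have hsum : ⟪q - p, q - p⟫_ℝ = ⟪x - p, q - p⟫_ℝ + ⟪x - q, p - q⟫_ℝ := by
    rw [← neg_sub q p, inner_neg_right, ← sub_eq_add_neg, ← inner_sub_left]
    congr 1
    abel
  have hnonpos : ⟪q - p, q - p⟫_ℝ ≤ 0 := by linarith [hp q hqK, hq p hpK]
  exact (sub_eq_zero.mp (real_inner_self_nonpos.mp hnonpos)).symm

theorem isClosestPoint_cone_iff (hK : Convex ℝ K)
    (hsmul : ∀ t : ℝ, 0 ≤ t → ∀ w ∈ K, t • w ∈ K) :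
    IsClosestPoint K x p ↔ p ∈ K ∧ (∀ w ∈ K, 0 ≤ ⟪p - x, w⟫_ℝ) ∧ ⟪p - x, p⟫_ℝ = 0 := by
  rw [isClosestPoint_iff_inner_sub_nonpos hK]
  refine ⟨fun ⟨hp, hvar⟩ => ⟨hp, fun w hw => ?_, ?_⟩, fun ⟨hp, hdual, horth⟩ => ⟨hp, ?_⟩⟩
  · have hpw : p + w ∈ K := by
      convert hsmul 2 zero_le_two _ (hK hp hw one_half_pos.le one_half_pos.le (add_halves 1))
        using 1
      module
    have := hvar _ hpw
    rw [add_sub_cancel_left, ← neg_sub, inner_neg_left] at this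
    linarith
  · have h0 := hvar 0 (by simpa using hsmul 0 le_rfl p hp)
    have h2 := hvar ((2 : ℝ) • p) (hsmul 2 zero_le_two p hp)
    rw [two_smul, add_sub_cancel_right, ← neg_sub, inner_neg_left] at h2
    rw [zero_sub, inner_neg_right, ← neg_sub, inner_neg_left, neg_neg] at h0
    linarith
  · intro w hw
    rw [← neg_sub, inner_neg_left, inner_sub_right, horth]
    linarith [hdual w hw]

end ClosestPoint

section DualBasis

variable {V ι : Type*} [NormedAddCommGroup V] [InnerProductSpace ℝ V] [Fintype ι]
  (b : Module.Basis ι ℝ V)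

theorem mem_coneGen_basis_iff {v : V} : v ∈ coneGen b ↔ ∀ i, 0 ≤ b.repr v i := by
  refine ⟨?_, fun hv => ⟨fun i => b.repr v i, hv, (b.sum_repr v).symm⟩⟩
  rintro ⟨c, hc, rfl⟩ i
  rw [b.repr_sum_self]
  exact hc i

theorem real_inner_eq_sum_repr_mul (v w : V) :
    ⟪v, w⟫_ℝ = ∑ i, b.repr v i * ⟪w, b i⟫_ℝ := by
  conv_lhs => rw [← b.sum_repr v]
  simp only [sum_inner, real_inner_smul_left]
  exact sum_congr rfl fun i _ => by rw [real_inner_comm]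

variable [DecidableEq ι] {ω : ι → V} (hω : ∀ i j, ⟪ω i, b j⟫_ℝ = if i = j then 1 else 0)
include hω

theorem inner_sum_smul_dual_basis (c : ι → ℝ) (i : ι) :
    ⟪∑ j, c j • ω j, b i⟫_ℝ = c i := by
  simp [sum_inner, real_inner_smul_left, hω]

theorem inner_dual_basis_eq_repr (v : V) (i : ι) : ⟪v, ω i⟫_ℝ = b.repr v i := by
  rw [real_inner_eq_sum_repr_mul b]
  simp [hω]

theorem mem_coneGen_dual_basis_iff {z : V} : z ∈ coneGen ω ↔ ∀ i, 0 ≤ ⟪z, b i⟫_ℝ := by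
  refine ⟨?_, fun hz => ⟨fun i => ⟪z, b i⟫_ℝ, hz, ?_⟩⟩
  · rintro ⟨c, hc, rfl⟩ i
    rw [inner_sum_smul_dual_basis b hω]
    exact hc i
  · exact InnerProductSpace.ext_inner_right_basis b fun i =>
      (inner_sum_smul_dual_basis b hω (fun i => ⟪z, b i⟫_ℝ) i).symm

theorem convex_coneGen_dual_basis : Convex ℝ (coneGen ω) := by
  intro u hu v hv s t hs ht _
  rw [mem_coneGen_dual_basis_iff b hω] at hu hv ⊢
  intro i
  rw [inner_add_left, real_inner_smul_left, real_inner_smul_left]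
  exact add_nonneg (mul_nonneg hs (hu i)) (mul_nonneg ht (hv i))

theorem smul_mem_coneGen_dual_basis {t : ℝ} (ht : 0 ≤ t) {z : V} (hz : z ∈ coneGen ω) :
    t • z ∈ coneGen ω := by
  rw [mem_coneGen_dual_basis_iff b hω] at hz ⊢
  intro i
  rw [real_inner_smul_left]
  exact mul_nonneg ht (hz i)

theorem mem_coneGen_basis_iff_inner_nonneg {v : V} :
    v ∈ coneGen b ↔ ∀ w ∈ coneGen ω, 0 ≤ ⟪v, w⟫_ℝ := by
  rw [mem_coneGen_basis_iff]
  refine ⟨fun hv w hw => ?_, fun hv i => ?_⟩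
  · rw [real_inner_eq_sum_repr_mul b]
    exact sum_nonneg fun i _ => mul_nonneg (hv i) ((mem_coneGen_dual_basis_iff b hω).mp hw i)
  · rw [← inner_dual_basis_eq_repr b hω]
    refine hv _ ((mem_coneGen_dual_basis_iff b hω).mpr fun j => ?_)
    rw [hω]
    split_ifs <;> norm_num

theorem inner_eq_zero_iff_complementary_slackness {v p : V} (hv : v ∈ coneGen b)
    (hp : p ∈ coneGen ω) :
    ⟪v, p⟫_ℝ = 0 ↔ ∀ i, b.repr v i ≠ 0 → ⟪p, b i⟫_ℝ = 0 := by
  have hterm : ∀ i ∈ univ, 0 ≤ b.repr v i * ⟪p, b i⟫_ℝ := fun i _ =>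
    mul_nonneg ((mem_coneGen_basis_iff b).mp hv i) ((mem_coneGen_dual_basis_iff b hω).mp hp i)
  rw [real_inner_eq_sum_repr_mul b, sum_eq_zero_iff_of_nonneg hterm]
  simp only [mem_univ, true_implies, mul_eq_zero, or_iff_not_imp_left]

theorem isClosestPoint_coneGen_dual_basis_iff {x p : V} :
    IsClosestPoint (coneGen ω) x p ↔ p ∈ coneGen ω ∧ p - x ∈ coneGen b ∧
      ∀ i, b.repr (p - x) i ≠ 0 → ⟪p, b i⟫_ℝ = 0 := by
  rw [isClosestPoint_cone_iff (convex_coneGen_dual_basis b hω)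
    fun t ht z hz => smul_mem_coneGen_dual_basis b hω ht hz,
    ← mem_coneGen_basis_iff_inner_nonneg b hω]
  refine and_congr_right fun hp => and_congr_right fun hpx => ?_
  exact inner_eq_zero_iff_complementary_slackness b hω hpx hp

end DualBasis

theorem langlands_retraction_unique_characterization_general
    {V ι : Type*} [NormedAddCommGroup V] [InnerProductSpace ℝ V]
    [Fintype ι] [DecidableEq ι] (b : Module.Basis ι ℝ V) (ω : ι → V)
    (hω : ∀ i j, ⟪ω i, b j⟫_ℝ = if i = j then 1 else 0)
    (x Lx : V) (hLx : IsClosestPoint (coneGen ω) x Lx) :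
    (Lx ∈ coneGen ω ∧ Lx - x ∈ coneGen (⇑b) ∧
        ∀ i, b.repr (Lx - x) i ≠ 0 → ⟪Lx, (b i : V)⟫_ℝ = 0) ∧
      ∀ y, y ∈ coneGen ω → y - x ∈ coneGen (⇑b) →
        (∀ i, b.repr (y - x) i ≠ 0 → ⟪y, (b i : V)⟫_ℝ = 0) → y = Lx :=
  ⟨(isClosestPoint_coneGen_dual_basis_iff b hω).mp hLx, fun _ hy hyx hslack =>
    ((isClosestPoint_coneGen_dual_basis_iff b hω).mpr ⟨hy, hyx, hslack⟩).unique
      (convex_coneGen_dual_basis b hω) hLx⟩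

/-- For an obtuse basis, `𝔏(x)` is the unique element `y` of
`{y ∈ V⁺ | y ≥ x}` such that `⟪y, α i⟫ = 0` whenever the coefficient of `α i`
in `y - x` is nonzero. -/
theorem langlands_retraction_unique_characterization
    {V ι : Type*} [NormedAddCommGroup V] [InnerProductSpace ℝ V] [FiniteDimensional ℝ V]
    [Fintype ι] [DecidableEq ι] (b : Module.Basis ι ℝ V) (ω : ι → V)
    (hω : ∀ i j, ⟪ω i, b j⟫_ℝ = if i = j then 1 else 0)
    (hobtuse : ∀ i j, i ≠ j → ⟪(b i : V), b j⟫_ℝ ≤ 0)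
    (x Lx : V) (hLx : IsClosestPoint (coneGen ω) x Lx) :
    (Lx ∈ coneGen ω ∧ Lx - x ∈ coneGen (⇑b) ∧
        ∀ i, b.repr (Lx - x) i ≠ 0 → ⟪Lx, (b i : V)⟫_ℝ = 0) ∧
      ∀ y, y ∈ coneGen ω → y - x ∈ coneGen (⇑b) →
        (∀ i, b.repr (y - x) i ≠ 0 → ⟪y, (b i : V)⟫_ℝ = 0) → y = Lx :=
  langlands_retraction_unique_characterization_general b ω hω x Lx hLx
end
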